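/- arXiv:2412.03066 — 2 statements merged into one kernel-verified Lean document; each statement's English description precedes it below -/
import Mathlib

section
/- If H is a convex subgraph of a graph G and X is a mutual-visibility set of G, then X ∩ V(H) is a mutual-visibility set of H. -/
open SimpleGraph

variable {V : Type*}

/-- Vertices `u` and `v` are `X`-visible in `G`: some shortest `u,v`-walk has
no internal vertex in `X`. -/
def XVisible (G : SimpleGraph V) (X : Set V) (u v : V) : Prop :=
  ∃ p : G.Walk u v, p.length = G.dist u v ∧
    ∀ w ∈ p.support, w ≠ u → w ≠ v → w ∉ X

/-- `X` is a mutual-visibility set of `G`. -/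
def MutualVis (G : SimpleGraph V) (X : Set V) : Prop :=
  ∀ ⦃u⦄, u ∈ X → ∀ ⦃v⦄, v ∈ X → XVisible G X u v

/-- `X` is a total mutual-visibility set of `G`. -/
def TotalVis (G : SimpleGraph V) (X : Set V) : Prop :=
  ∀ u v : V, XVisible G X u v

/-- `X` is a dual mutual-visibility set of `G`. -/
def DualVis (G : SimpleGraph V) (X : Set V) : Prop :=
  MutualVis G X ∧ ∀ ⦃u⦄, u ∉ X → ∀ ⦃v⦄, v ∉ X → XVisible G X u v

/-- `X` is an outer mutual-visibility set of `G`. -/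
def OuterVis (G : SimpleGraph V) (X : Set V) : Prop :=
  MutualVis G X ∧ ∀ ⦃u⦄, u ∈ X → ∀ ⦃v⦄, v ∉ X → XVisible G X u v

/-- `S` induces a convex subgraph of `G`. -/
def IsConvexSet (G : SimpleGraph V) (S : Set V) : Prop :=
  ∀ u ∈ S, ∀ v ∈ S, ∀ p : G.Walk u v, p.length = G.dist u v →
    ∀ w ∈ p.support, w ∈ S

/-- The cycle graph on `ZMod n`. -/
def cyc (n : ℕ) : SimpleGraph (ZMod n) :=
  SimpleGraph.fromRel (fun u v => u - v = 1)

/-!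
By convexity, a shortest `u,v`-walk of `G` witnessing `X`-visibility stays inside `H`, and it
is still a shortest walk of `H` because the inclusion `H → G` does not increase distances.
-/

namespace SimpleGraph

variable {W : Type*} {G : SimpleGraph V} {u v : V}

theorem Hom.dist_map_le {G' : SimpleGraph W} (f : G →g G') (h : G.Reachable u v) :
    G'.dist (f u) (f v) ≤ G.dist u v := by
  obtain ⟨p, hp⟩ := h.exists_walk_length_eq_dist
  calc G'.dist (f u) (f v) ≤ (p.map f).length := dist_le _
    _ = G.dist u v := by rw [Walk.length_map, hp]

namespace Walk

variable {s : Set V}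

theorem length_induce (p : G.Walk u v) (hp : ∀ x ∈ p.support, x ∈ s) :
    (p.induce s hp).length = p.length :=
  (length_map _ _).symm.trans (congrArg length (map_induce p hp))

theorem length_induce_eq_dist (p : G.Walk u v) (hlen : p.length = G.dist u v)
    (hp : ∀ x ∈ p.support, x ∈ s) :
    (p.induce s hp).length =
      (G.induce s).dist ⟨u, hp u p.start_mem_support⟩ ⟨v, hp v p.end_mem_support⟩ := by
  refine le_antisymm ?_ (dist_le _)
  calc (p.induce s hp).length = G.dist u v := by rw [length_induce, hlen]
    _ ≤ _ := (Embedding.induce s).toHom.dist_map_le ⟨p.induce s hp⟩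

end Walk

end SimpleGraph

theorem XVisible.induce_of_isConvexSet {G : SimpleGraph V} {S X : Set V}
    (hS : IsConvexSet G S) {u v : S} (h : XVisible G X u v) :
    XVisible (G.induce S) (Subtype.val ⁻¹' X) u v := by
  obtain ⟨p, hlen, hint⟩ := h
  have hpS : ∀ x ∈ p.support, x ∈ S := hS u u.2 v v.2 p hlen
  refine ⟨p.induce S hpS, p.length_induce_eq_dist hlen hpS, fun w hw hwu hwv => ?_⟩
  rw [Walk.support_induce, List.mem_attachWith] at hw
  exact hint w hw (Subtype.val_injective.ne hwu) (Subtype.val_injective.ne hwv)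

theorem stmt_3 (G : SimpleGraph V) (S : Set V) (hS : IsConvexSet G S)
    (X : Set V) (hX : MutualVis G X) :
    MutualVis (G.induce S) (Subtype.val ⁻¹' X : Set S) :=
  fun _ hu _ hv => (hX hu hv).induce_of_isConvexSet hS
end

section
/- For n ≥ 3, a subset X of the vertices of K_{n,n} with parts A and B is a total mutual-visibility set if and only if |X∩A| ≤ n−1 and |X∩B| ≤ n−1; consequently the total mutual-visibility number of K_{n,n} equals 2n−2 and the number of total mutual-visibility sets of size i equals the coefficient of x^i in ((x+1)^n − x^n)^2. -/
open SimpleGraph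

variable {V : Type*}

/-!
In `K_{m,n}` two distinct vertices on the same side are at distance 2 and their shortest paths
are exactly the paths through one vertex of the other side; every other pair is adjacent or
equal. So `X` is a total mutual-visibility set iff it misses a vertex on each side. Splitting a
vertex set into its two sides, the size generating polynomial of these sets is the product of
those of the proper subsets of the two sides, `((x+1)^m - x^m) * ((x+1)^n - x^n)`.
-/

open Finset Polynomial

section Visibility

variable {G : SimpleGraph V} {X : Set V} {u v w : V}

lemma xVisible_refl (u : V) : XVisible G X u u :=
  ⟨.nil, by simp, by simp⟩

lemma SimpleGraph.Adj.xVisible (h : G.Adj u v) : XVisible G X u v :=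
  ⟨h.toWalk, by simp [dist_eq_one_iff_adj.mpr h], by simp +contextual⟩

lemma dist_eq_two_of_adj_of_adj (hne : u ≠ v) (hnadj : ¬G.Adj u v) (huw : G.Adj u w)
    (hwv : G.Adj w v) : G.dist u v = 2 := by
  let p : G.Walk u v := .cons huw (.cons hwv .nil)
  have hle : G.dist u v ≤ 2 := dist_le p
  have h0 : G.dist u v ≠ 0 := by rwa [Ne, Reachable.dist_eq_zero_iff ⟨p⟩]
  have h1 : G.dist u v ≠ 1 := by rwa [Ne, dist_eq_one_iff_adj]
  omega

lemma xVisible_iff_of_dist_eq_two (h : G.dist u v = 2) :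
    XVisible G X u v ↔ ∃ w, G.Adj u w ∧ G.Adj w v ∧ w ∉ X := by
  constructor
  · rintro ⟨p, hlen, hint⟩
    rw [h] at hlen
    obtain _ | ⟨huw, _ | ⟨hwv, _ | _⟩⟩ := p <;> simp at hlen
    exact ⟨_, huw, hwv, hint _ (by simp) huw.ne.symm hwv.ne⟩
  · rintro ⟨w, huw, hwv, hw⟩
    refine ⟨.cons huw (.cons hwv .nil), by simp [h], ?_⟩
    simp only [Walk.support_cons, Walk.support_nil, List.mem_cons, List.not_mem_nil]
    rintro x (rfl | rfl | rfl | ⟨⟩) <;> simp_all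

end Visibility

section CompleteBipartite

variable {α β : Type*} {X : Set (α ⊕ β)}

lemma xVisible_inl_inl_iff [Nonempty β] {a a' : α} (h : a ≠ a') :
    XVisible (completeBipartiteGraph α β) X (.inl a) (.inl a') ↔ ∃ b, .inr b ∉ X := by
  obtain ⟨b⟩ := ‹Nonempty β›
  rw [xVisible_iff_of_dist_eq_two <|
    dist_eq_two_of_adj_of_adj (w := .inr b) (by simpa) (by simp) (by simp) (by simp)]
  constructor
  · rintro ⟨_ | b', hadj, -, hb'⟩
    · simp at hadj
    · exact ⟨b', hb'⟩
  · rintro ⟨b', hb'⟩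
    exact ⟨.inr b', by simp, by simp, hb'⟩

lemma xVisible_inr_inr_iff [Nonempty α] {b b' : β} (h : b ≠ b') :
    XVisible (completeBipartiteGraph α β) X (.inr b) (.inr b') ↔ ∃ a, .inl a ∉ X := by
  obtain ⟨a⟩ := ‹Nonempty α›
  rw [xVisible_iff_of_dist_eq_two <|
    dist_eq_two_of_adj_of_adj (w := .inl a) (by simpa) (by simp) (by simp) (by simp)]
  constructor
  · rintro ⟨a' | _, hadj, -, ha'⟩
    · exact ⟨a', ha'⟩
    · simp at hadj
  · rintro ⟨a', ha'⟩
    exact ⟨.inl a', by simp, by simp, ha'⟩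

theorem totalVis_completeBipartiteGraph_iff [Nontrivial α] [Nontrivial β] :
    TotalVis (completeBipartiteGraph α β) X ↔ (∃ a, .inl a ∉ X) ∧ ∃ b, .inr b ∉ X := by
  constructor
  · intro hX
    obtain ⟨a, a', ha⟩ := exists_pair_ne α
    obtain ⟨b, b', hb⟩ := exists_pair_ne β
    exact ⟨(xVisible_inr_inr_iff hb).1 (hX _ _), (xVisible_inl_inl_iff ha).1 (hX _ _)⟩
  · rintro ⟨hA, hB⟩ (a | b) (a' | b')
    · obtain rfl | h := eq_or_ne a a'
      · exact xVisible_refl _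
      · exact (xVisible_inl_inl_iff h).2 hB
    · exact Adj.xVisible (by simp)
    · exact Adj.xVisible (by simp)
    · obtain rfl | h := eq_or_ne b b'
      · exact xVisible_refl _
      · exact (xVisible_inr_inr_iff h).2 hA

theorem totalVis_completeBipartiteGraph_coe_iff [Fintype α] [Fintype β] [Nontrivial α]
    [Nontrivial β] {s : Finset (α ⊕ β)} :
    TotalVis (completeBipartiteGraph α β) s ↔ s.toLeft ≠ univ ∧ s.toRight ≠ univ := by
  simp [totalVis_completeBipartiteGraph_iff, eq_univ_iff_forall]

end CompleteBipartite

section SizeGeneratingPolynomial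

variable {R α β : Type*}

lemma coeff_sum_X_pow_card [Semiring R] (S : Finset (Finset α)) (i : ℕ) :
    (∑ s ∈ S, (X : R[X]) ^ #s).coeff i = #{s ∈ S | #s = i} := by
  simp [coeff_X_pow, eq_comm]

lemma sum_X_pow_card_ne_univ [CommRing R] [Fintype α] [DecidableEq α] :
    ∑ s : Finset α with s ≠ univ, (X : R[X]) ^ #s =
      (X + 1) ^ Fintype.card α - X ^ Fintype.card α := by
  have hall : ∑ s : Finset α, (X : R[X]) ^ #s = (X + 1) ^ Fintype.card α := by
    simpa using sum_pow_mul_eq_add_pow (X : R[X]) 1 (univ : Finset α)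
  rw [filter_ne', sum_erase_eq_sub (mem_univ _), hall, card_univ]

lemma sum_X_pow_card_toLeft_toRight [CommSemiring R] [Fintype α] [Fintype β]
    (P : Finset α → Prop) (Q : Finset β → Prop) [DecidablePred P] [DecidablePred Q] :
    ∑ s : Finset (α ⊕ β) with P s.toLeft ∧ Q s.toRight, (X : R[X]) ^ #s =
      (∑ s : Finset α with P s, X ^ #s) * ∑ t : Finset β with Q t, X ^ #t := by
  rw [sum_filter, sum_filter, sum_filter, sum_mul_sum, ← Fintype.sum_prod_type']
  refine Fintype.sum_equiv Finset.sumEquiv.toEquiv _ _ fun s ↦ ?_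
  rw [← card_toLeft_add_card_toRight, pow_add, ite_zero_mul_ite_zero]
  rfl

end SizeGeneratingPolynomial

lemma Nat.card_subtype_set_eq_card_filter [Fintype V] (P : Set V → Prop) [DecidablePred P] :
    Nat.card {X : Set V // P X} = #{s : Finset V | P s} := by
  rw [← Fintype.card_subtype, ← Nat.card_eq_fintype_card]
  exact Nat.card_congr (Fintype.finsetEquivSet.subtypeEquiv fun _ ↦ Iff.rfl).symm

lemma Set.ncard_inter_le_ncard_sub_one_iff {α : Type*} {s t : Set α} (ht : t.Finite)
    (hne : t.Nonempty) : (s ∩ t).ncard ≤ t.ncard - 1 ↔ ¬t ⊆ s := by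
  have hpos : 0 < t.ncard := (ncard_pos ht).2 hne
  constructor
  · intro h hts
    rw [inter_eq_right.2 hts] at h
    omega
  · intro h
    have := ncard_lt_ncard (inter_ssubset_right_iff.2 h) ht
    omega

section CompleteBipartiteCount

open Set

variable {α β : Type*} [Fintype α] [Fintype β] [Nontrivial α] [Nontrivial β]

theorem totalVis_completeBipartiteGraph_iff_ncard {X : Set (α ⊕ β)} :
    TotalVis (completeBipartiteGraph α β) X ↔
      (X ∩ range .inl).ncard ≤ Fintype.card α - 1 ∧
        (X ∩ range .inr).ncard ≤ Fintype.card β - 1 := by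
  rw [totalVis_completeBipartiteGraph_iff, ← Nat.card_eq_fintype_card,
    ← Nat.card_eq_fintype_card, ← ncard_range_of_injective Sum.inl_injective,
    ← ncard_range_of_injective Sum.inr_injective,
    Set.ncard_inter_le_ncard_sub_one_iff (toFinite _) (range_nonempty _),
    Set.ncard_inter_le_ncard_sub_one_iff (toFinite _) (range_nonempty _)]
  simp [range_subset_iff]

theorem ncard_le_of_totalVis_completeBipartiteGraph {X : Set (α ⊕ β)}
    (hX : TotalVis (completeBipartiteGraph α β) X) :
    X.ncard ≤ Fintype.card α + Fintype.card β - 2 := by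
  obtain ⟨hA, hB⟩ := totalVis_completeBipartiteGraph_iff_ncard.1 hX
  have hsplit := ncard_inter_add_ncard_sdiff_eq_ncard X (range Sum.inl)
  rw [sdiff_eq, compl_range_inl] at hsplit
  have := Fintype.one_lt_card (α := α)
  have := Fintype.one_lt_card (α := β)
  omega

theorem exists_totalVis_completeBipartiteGraph_ncard_eq :
    ∃ X : Set (α ⊕ β), TotalVis (completeBipartiteGraph α β) X ∧
      X.ncard = Fintype.card α + Fintype.card β - 2 := by
  obtain ⟨a⟩ : Nonempty α := inferInstance
  obtain ⟨b⟩ : Nonempty β := inferInstance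
  refine ⟨{.inl a, .inr b}ᶜ, totalVis_completeBipartiteGraph_iff.2 ⟨⟨a, by simp⟩, b, by simp⟩, ?_⟩
  have h := ncard_add_ncard_compl ({.inl a, .inr b} : Set (α ⊕ β))
  rw [ncard_pair Sum.inl_ne_inr, Nat.card_eq_fintype_card, Fintype.card_sum] at h
  omega

theorem card_totalVis_completeBipartiteGraph_ncard_eq (i : ℕ) :
    (Nat.card {X : Set (α ⊕ β) // TotalVis (completeBipartiteGraph α β) X ∧ X.ncard = i} : ℤ) =
      (((X + 1) ^ Fintype.card α - X ^ Fintype.card α) *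
        ((X + 1) ^ Fintype.card β - X ^ Fintype.card β) : ℤ[X]).coeff i := by
  classical
  rw [Nat.card_subtype_set_eq_card_filter, ← sum_X_pow_card_ne_univ, ← sum_X_pow_card_ne_univ,
    ← sum_X_pow_card_toLeft_toRight, coeff_sum_X_pow_card, filter_filter]
  simp only [totalVis_completeBipartiteGraph_coe_iff, ncard_coe_finset]

end CompleteBipartiteCount

theorem stmt_10 (n : ℕ) (hn : 3 ≤ n) :
    (∀ X : Set (Fin n ⊕ Fin n),
      TotalVis (completeBipartiteGraph (Fin n) (Fin n)) X ↔
        (X ∩ Set.range Sum.inl).ncard ≤ n - 1 ∧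
          (X ∩ Set.range Sum.inr).ncard ≤ n - 1) ∧
    (∃ X : Set (Fin n ⊕ Fin n),
      TotalVis (completeBipartiteGraph (Fin n) (Fin n)) X ∧
        X.ncard = 2 * n - 2) ∧
    (∀ X : Set (Fin n ⊕ Fin n),
      TotalVis (completeBipartiteGraph (Fin n) (Fin n)) X →
        X.ncard ≤ 2 * n - 2) ∧
    (∀ i : ℕ,
      (Nat.card {X : Set (Fin n ⊕ Fin n) //
          TotalVis (completeBipartiteGraph (Fin n) (Fin n)) X ∧ X.ncard = i} : ℤ) =
        ((((Polynomial.X + 1) ^ n - Polynomial.X ^ n) ^ 2 : Polynomial ℤ)).coeff i) := by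
  have : Nontrivial (Fin n) := Fin.nontrivial_iff_two_le.2 (by omega)
  have hcard : Fintype.card (Fin n) + Fintype.card (Fin n) - 2 = 2 * n - 2 := by
    simp only [Fintype.card_fin]; omega
  refine ⟨fun X ↦ ?_, ?_, fun X hX ↦ ?_, fun i ↦ ?_⟩
  · simpa using totalVis_completeBipartiteGraph_iff_ncard (X := X)
  · rw [← hcard]
    exact exists_totalVis_completeBipartiteGraph_ncard_eq
  · exact hcard ▸ ncard_le_of_totalVis_completeBipartiteGraph hX
  · simpa [sq] using card_totalVis_completeBipartiteGraph_ncard_eq (α := Fin n) (β := Fin n) i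
end
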